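/- arXiv:2310.18074 — 4 statements merged into one kernel-verified Lean document; each statement's English description precedes it below -/
import Mathlib

section
/- Let (X,d) be a compact metric space, (Z,d_Z) a σ-compact locally compact metric space (having a countable basis of relatively compact open sets), and f_M : X^M × Z → ℝ a sequence of functions that are symmetric in x, uniformly bounded as |f_M(x,z)| ≤ B_f + b(z), and uniformly Lipschitz: |f_M(x₁,z₁) − f_M(x₂,z₂)| ≤ L_f(d_KR(μ̂[x₁],μ̂[x₂]) + d_Z(z₁,z₂)). Then there exists a subsequence (f_{M_ℓ}) and a continuous L_f-Lipschitz function f : P(X) × Z → ℝ such that for every compact K ⊆ Z, sup_{x ∈ X^{M_ℓ}, z ∈ K} |f_{M_ℓ}(x,z) − f(μ̂[x],z)| → 0 as ℓ → ∞; moreover there exists B_F ≥ 0 with |f(μ,z)| ≤ B_F + b(z) for all μ, z. -/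
/-!
Each `f_M` is `L_f`-Lipschitz for `d_KR + d_Z` on the pairs (empirical measure, point), so its
McShane extension `G_M(p) = inf_{x,z} f_M(x,z) + L_f (d_KR + d_Z)(p, (μ̂[x], z))` is an
`L_f`-Lipschitz function on `P(X) × Z` bounded by `B_f + L_f diam X + b(z)`. A diagonal argument
gives a subsequence along which `G_M` converges on a countable dense subset of `P(X) × Z`
(`P(X)` is compact metrizable), and the limit extends, again by McShane, to an `L_f`-Lipschitz `F`.
On a compact space `d_KR` is continuous for the weak topology: a `1`-Lipschitz function is
uniformly `ε`-close to its interpolant along a finite partition of unity of mesh `ε`, and the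
integrals of the finitely many bumps converge. Hence the `G_M` are equicontinuous, and convergence
on a dense set upgrades to uniform convergence on the compact sets `P(X) × K`.
-/

open MeasureTheory Filter
open scoped ENNReal

/-- Kantorovich–Rubinstein metric: `d_KR(μ,ν) = sup{∫φ dμ − ∫φ dν : φ 1-Lipschitz}`. -/
noncomputable def dKR {X : Type*} [MeasurableSpace X] [MetricSpace X] (μ ν : Measure X) : ℝ :=
  ⨆ φ : {f : X → ℝ // LipschitzWith 1 f}, (∫ x, φ.1 x ∂μ - ∫ x, φ.1 x ∂ν)

/-- The empirical measure `(1/M) ∑ᵢ δ_{xᵢ}` of a tuple `x ∈ X^M`. -/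
noncomputable def empMeasure {X : Type*} [MeasurableSpace X] {M : ℕ} (x : Fin M → X) : Measure X :=
  ((M : ℝ≥0∞)⁻¹) • ∑ i, Measure.dirac (x i)

theorem empMeasure_prob {X : Type*} [MeasurableSpace X] {M : ℕ} (x : Fin (M + 1) → X) :
    IsProbabilityMeasure (empMeasure x) := by
  constructor
  simp only [empMeasure, Measure.smul_apply, smul_eq_mul]
  rw [Measure.coe_finset_sum]
  simp only [Finset.sum_apply, measure_univ, Finset.sum_const, Finset.card_univ,
    Fintype.card_fin, nsmul_eq_mul, mul_one]
  exact ENNReal.inv_mul_cancel (by exact_mod_cast Nat.succ_ne_zero M) (by simp)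

/-- The empirical measure of a (nonempty) tuple, as a probability measure. -/
noncomputable def empProb {X : Type*} [MeasurableSpace X] {M : ℕ} (x : Fin (M + 1) → X) :
    ProbabilityMeasure X :=
  ⟨empMeasure x, empMeasure_prob x⟩

open Topology Metric

theorem Continuous.integrable_of_compactSpace {α : Type*} [TopologicalSpace α] [CompactSpace α]
    [MeasurableSpace α] [OpensMeasurableSpace α] {f : α → ℝ} (hf : Continuous f)
    (μ : Measure α) [IsFiniteMeasure μ] : Integrable f μ :=
  hf.integrable_of_hasCompactSupport (.of_compactSpace f)

theorem LipschitzWith.abs_sub_le_diam {X : Type*} [MetricSpace X] [CompactSpace X] {φ : X → ℝ}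
    (hφ : LipschitzWith 1 φ) (a b : X) : |φ a - φ b| ≤ diam (Set.univ : Set X) := by
  rw [← Real.dist_eq]
  simpa using (hφ.dist_le_mul a b).trans
    (by simpa using dist_le_diam_of_mem isCompact_univ.isBounded (Set.mem_univ a) (Set.mem_univ b))

theorem PartitionOfUnity.abs_sub_sum_mul_le {X ι : Type*} [PseudoMetricSpace X] [Fintype ι]
    {w : ι → X} {ε : ℝ} (χ : PartitionOfUnity ι X Set.univ)
    (hχ : χ.IsSubordinate fun i => ball (w i) ε) {ψ : X → ℝ} (hψ : LipschitzWith 1 ψ) (a : X) :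
    |ψ a - ∑ i, χ i a * ψ (w i)| ≤ ε := by
  have hsum : ∑ i, χ i a = 1 := by
    rw [← finsum_eq_sum_of_fintype]
    exact χ.sum_eq_one (Set.mem_univ a)
  have hterm : ∀ i, |χ i a * (ψ a - ψ (w i))| ≤ χ i a * ε := by
    intro i
    rw [abs_mul, abs_of_nonneg (χ.nonneg i a)]
    by_cases h : χ i a = 0
    · simp [h]
    refine mul_le_mul_of_nonneg_left ?_ (χ.nonneg i a)
    have ha : a ∈ ball (w i) ε := hχ i (subset_tsupport _ h)
    calc |ψ a - ψ (w i)| = dist (ψ a) (ψ (w i)) := (Real.dist_eq _ _).symm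
      _ ≤ dist a (w i) := by simpa using hψ.dist_le_mul a (w i)
      _ ≤ ε := (mem_ball.1 ha).le
  calc |ψ a - ∑ i, χ i a * ψ (w i)| = |∑ i, χ i a * (ψ a - ψ (w i))| := by
        simp only [mul_sub, Finset.sum_sub_distrib, ← Finset.sum_mul, hsum, one_mul]
    _ ≤ ∑ i, χ i a * ε :=
        (Finset.abs_sum_le_sum_abs _ _).trans (Finset.sum_le_sum fun i _ => hterm i)
    _ = ε := by rw [← Finset.sum_mul, hsum, one_mul]

theorem exists_partitionOfUnity_isSubordinate_ball {X : Type*} [MetricSpace X] [CompactSpace X]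
    {ε : ℝ} (hε : 0 < ε) :
    ∃ (t : Finset X) (χ : PartitionOfUnity t X Set.univ),
      χ.IsSubordinate fun w => ball (w : X) ε := by
  obtain ⟨t, ht⟩ := isCompact_univ.elim_finite_subcover (fun w : X => ball w ε)
    (fun _ => isOpen_ball) fun a _ => Set.mem_iUnion.2 ⟨a, mem_ball_self hε⟩
  obtain ⟨χ, hχ⟩ := PartitionOfUnity.exists_isSubordinate isClosed_univ
    (fun w : t => ball (w : X) ε) (fun _ => isOpen_ball) fun a ha => by
      obtain ⟨w, hw, ha⟩ := Set.mem_iUnion₂.1 (ht ha)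
      exact Set.mem_iUnion.2 ⟨⟨w, hw⟩, ha⟩
  exact ⟨t, χ, hχ⟩

instance {X : Type*} [PseudoEMetricSpace X] : Nonempty {φ : X → ℝ // LipschitzWith 1 φ} :=
  ⟨⟨fun _ => 0, LipschitzWith.const' 0⟩⟩

section KantorovichRubinstein

variable {X : Type*} [MetricSpace X] [MeasurableSpace X]

theorem dKR_le {μ ν : Measure X} {r : ℝ}
    (h : ∀ φ : X → ℝ, LipschitzWith 1 φ → ∫ a, φ a ∂μ - ∫ a, φ a ∂ν ≤ r) : dKR μ ν ≤ r :=
  ciSup_le fun φ => h φ.1 φ.2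

theorem dKR_self (μ : Measure X) : dKR μ μ = 0 := by
  simp [dKR]

variable [CompactSpace X] [BorelSpace X]

theorem LipschitzWith.integral_sub_integral_le_diam {φ : X → ℝ} (hφ : LipschitzWith 1 φ)
    (μ ν : Measure X) [IsProbabilityMeasure μ] [IsProbabilityMeasure ν] :
    ∫ a, φ a ∂μ - ∫ a, φ a ∂ν ≤ diam (Set.univ : Set X) := by
  have hint := hφ.continuous.integrable_of_compactSpace
  have hpt : ∀ a b, φ a ≤ φ b + diam (Set.univ : Set X) := fun a b => by
    linarith [le_abs_self (φ a - φ b), hφ.abs_sub_le_diam a b]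
  have h1 : ∀ b, ∫ a, φ a ∂μ ≤ φ b + diam (Set.univ : Set X) := fun b => by
    simpa using integral_mono (hint μ) (integrable_const _) fun a => hpt a b
  have h2 : ∫ a, φ a ∂μ - diam (Set.univ : Set X) ≤ ∫ b, φ b ∂ν := by
    simpa using integral_mono (integrable_const _) (hint ν) fun b => sub_le_iff_le_add.2 (h1 b)
  linarith

theorem le_dKR {φ : X → ℝ} (hφ : LipschitzWith 1 φ) (μ ν : Measure X) [IsProbabilityMeasure μ]
    [IsProbabilityMeasure ν] : ∫ a, φ a ∂μ - ∫ a, φ a ∂ν ≤ dKR μ ν :=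
  le_ciSup (f := fun ψ : {ψ : X → ℝ // LipschitzWith 1 ψ} => ∫ a, ψ.1 a ∂μ - ∫ a, ψ.1 a ∂ν)
    ⟨_, by rintro _ ⟨ψ, rfl⟩; exact ψ.2.integral_sub_integral_le_diam μ ν⟩ ⟨φ, hφ⟩

theorem dKR_le_diam (μ ν : Measure X) [IsProbabilityMeasure μ] [IsProbabilityMeasure ν] :
    dKR μ ν ≤ diam (Set.univ : Set X) :=
  dKR_le fun _ hφ => hφ.integral_sub_integral_le_diam μ ν

theorem dKR_nonneg (μ ν : Measure X) [IsProbabilityMeasure μ] [IsProbabilityMeasure ν] :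
    0 ≤ dKR μ ν := by
  simpa using le_dKR (LipschitzWith.const' (0 : ℝ)) μ ν

theorem dKR_comm (μ ν : Measure X) [IsProbabilityMeasure μ] [IsProbabilityMeasure ν] :
    dKR μ ν = dKR ν μ := by
  have key : ∀ (ρ τ : Measure X) [IsProbabilityMeasure ρ] [IsProbabilityMeasure τ],
      dKR ρ τ ≤ dKR τ ρ := fun ρ τ _ _ => dKR_le fun φ hφ => by
    have := le_dKR hφ.neg τ ρ
    simp only [Pi.neg_apply, integral_neg] at this
    linarith
  exact le_antisymm (key μ ν) (key ν μ)

theorem dKR_triangle (μ ν ρ : Measure X) [IsProbabilityMeasure μ] [IsProbabilityMeasure ν]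
    [IsProbabilityMeasure ρ] : dKR μ ρ ≤ dKR μ ν + dKR ν ρ :=
  dKR_le fun φ hφ => by linarith [le_dKR hφ μ ν, le_dKR hφ ν ρ]

theorem abs_integral_sub_sum_integral_mul_le {ι : Type*} [Fintype ι] {w : ι → X} {ε : ℝ}
    (χ : PartitionOfUnity ι X Set.univ) (hχ : χ.IsSubordinate fun i => ball (w i) ε)
    {ψ : X → ℝ} (hψ : LipschitzWith 1 ψ) (ρ : Measure X) [IsProbabilityMeasure ρ] :
    |∫ a, ψ a ∂ρ - ∑ i, (∫ a, χ i a ∂ρ) * ψ (w i)| ≤ ε := by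
  have hχint : ∀ i, Integrable (χ i) ρ := fun i => (χ i).continuous.integrable_of_compactSpace ρ
  have hsum : ∑ i, (∫ a, χ i a ∂ρ) * ψ (w i) = ∫ a, ∑ i, χ i a * ψ (w i) ∂ρ := by
    rw [integral_finsetSum _ fun i _ => (hχint i).mul_const _]
    simp only [integral_mul_const]
  rw [hsum, ← integral_sub (hψ.continuous.integrable_of_compactSpace ρ)
    (integrable_finsetSum _ fun i _ => (hχint i).mul_const _)]
  simpa using norm_integral_le_of_norm_le_const (μ := ρ)
    (Eventually.of_forall fun a => (Real.norm_eq_abs _).trans_le (χ.abs_sub_sum_mul_le hχ hψ a))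

theorem dKR_le_of_partitionOfUnity {ι : Type*} [Fintype ι] {w : ι → X} {ε : ℝ}
    (χ : PartitionOfUnity ι X Set.univ) (hχ : χ.IsSubordinate fun i => ball (w i) ε) (x₀ : X)
    (μ ν : Measure X) [IsProbabilityMeasure μ] [IsProbabilityMeasure ν] :
    dKR μ ν ≤ 2 * ε + diam (Set.univ : Set X) * ∑ i, |∫ a, χ i a ∂μ - ∫ a, χ i a ∂ν| := by
  refine dKR_le fun ψ hψ => ?_
  set ψ₀ : X → ℝ := fun a => ψ a - ψ x₀
  have hψ₀ : LipschitzWith 1 ψ₀ := by simpa using hψ.sub (LipschitzWith.const (ψ x₀))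
  have hshift : ∀ (ρ : Measure X) [IsProbabilityMeasure ρ], ∫ a, ψ₀ a ∂ρ = ∫ a, ψ a ∂ρ - ψ x₀ :=
    fun ρ _ => by
      simp [ψ₀, integral_sub (hψ.continuous.integrable_of_compactSpace ρ) (integrable_const _)]
  have hμ := abs_integral_sub_sum_integral_mul_le χ hχ hψ₀ μ
  have hν := abs_integral_sub_sum_integral_mul_le χ hχ hψ₀ ν
  have hdiff : ∑ i, (∫ a, χ i a ∂μ) * ψ₀ (w i) - ∑ i, (∫ a, χ i a ∂ν) * ψ₀ (w i)
      ≤ diam (Set.univ : Set X) * ∑ i, |∫ a, χ i a ∂μ - ∫ a, χ i a ∂ν| := by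
    rw [← Finset.sum_sub_distrib, Finset.mul_sum]
    refine Finset.sum_le_sum fun i _ => ?_
    rw [← sub_mul, mul_comm]
    exact (le_abs_self _).trans ((abs_mul _ _).trans_le
      (mul_le_mul_of_nonneg_right (hψ.abs_sub_le_diam (w i) x₀) (abs_nonneg _)))
  rw [hshift μ, hshift ν] at *
  have := abs_le.1 hμ
  have := abs_le.1 hν
  linarith

theorem tendsto_dKR_nhds (μ₀ : ProbabilityMeasure X) :
    Tendsto (fun μ : ProbabilityMeasure X => dKR (μ : Measure X) μ₀) (𝓝 μ₀) (𝓝 0) := by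
  obtain ⟨x₀⟩ := μ₀.nonempty
  refine tendsto_order.2 ⟨fun a ha => Eventually.of_forall fun μ => ha.trans_le (dKR_nonneg _ _),
    fun ε hε => ?_⟩
  obtain ⟨t, χ, hχ⟩ :=
    exists_partitionOfUnity_isSubordinate_ball (X := X) (ε := ε / 3) (by positivity)
  have hχ_tendsto : ∀ i, Tendsto (fun μ : ProbabilityMeasure X => ∫ a, χ i a ∂(μ : Measure X))
      (𝓝 μ₀) (𝓝 (∫ a, χ i a ∂(μ₀ : Measure X))) := fun i => by
    simpa using ProbabilityMeasure.tendsto_iff_forall_integral_tendsto.1 tendsto_id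
      (BoundedContinuousFunction.mkOfCompact (χ i))
  have hbound : Tendsto (fun μ : ProbabilityMeasure X => 2 * (ε / 3) + diam (Set.univ : Set X) *
      ∑ i, |∫ a, χ i a ∂(μ : Measure X) - ∫ a, χ i a ∂(μ₀ : Measure X)|) (𝓝 μ₀)
      (𝓝 (2 * (ε / 3))) := by
    simpa using ((tendsto_finsetSum Finset.univ fun i _ =>
      ((hχ_tendsto i).sub_const (∫ a, χ i a ∂(μ₀ : Measure X))).abs).const_mul
      (diam (Set.univ : Set X))).const_add (2 * (ε / 3))
  filter_upwards [hbound.eventually_lt_const (by linarith : 2 * (ε / 3) < ε)] with μ hμ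
  exact (dKR_le_of_partitionOfUnity χ hχ x₀ _ _).trans_lt hμ

theorem continuous_dKR :
    Continuous fun p : ProbabilityMeasure X × ProbabilityMeasure X =>
      dKR (p.1 : Measure X) p.2 := by
  refine continuous_iff_continuousAt.2 ?_
  rintro ⟨μ₀, ν₀⟩
  rw [ContinuousAt, tendsto_iff_dist_tendsto_zero]
  have hlim := ((tendsto_dKR_nhds μ₀).comp (continuous_fst.tendsto (μ₀, ν₀))).add
    ((tendsto_dKR_nhds ν₀).comp (continuous_snd.tendsto (μ₀, ν₀)))
  rw [add_zero] at hlim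
  refine squeeze_zero (fun _ => dist_nonneg) (fun p => ?_) hlim
  simp only [Function.comp_apply, Real.dist_eq]
  rw [abs_sub_le_iff]
  have := dKR_triangle (p.1 : Measure X) μ₀ p.2
  have := dKR_triangle (μ₀ : Measure X) ν₀ p.2
  have := dKR_triangle (μ₀ : Measure X) p.1 ν₀
  have := dKR_triangle (p.1 : Measure X) p.2 ν₀
  rw [dKR_comm (μ₀ : Measure X) p.1, dKR_comm (ν₀ : Measure X) p.2] at *
  constructor <;> linarith

end KantorovichRubinstein

theorem exists_extension_abs_sub_le {α ι : Type*} [Nonempty ι] {d : α → α → ℝ}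
    (d_self : ∀ a, d a a = 0) (d_comm : ∀ a b, d a b = d b a)
    (d_triangle : ∀ a b c, d a c ≤ d a b + d b c) {L : ℝ} (hL : 0 ≤ L) (g : ι → α) (V : ι → ℝ)
    (hV : ∀ i j, V i - V j ≤ L * d (g i) (g j)) :
    ∃ F : α → ℝ, (∀ a b, |F a - F b| ≤ L * d a b) ∧ ∀ i, F (g i) = V i := by
  have hbdd : ∀ a, BddBelow (Set.range fun i => V i + L * d a (g i)) := by
    intro a
    obtain ⟨i₀⟩ := ‹Nonempty ι›
    refine ⟨V i₀ - L * d (g i₀) a, ?_⟩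
    rintro _ ⟨i, rfl⟩
    have := mul_le_mul_of_nonneg_left (d_triangle (g i₀) a (g i)) hL
    linarith [hV i₀ i]
  set F : α → ℝ := fun a => ⨅ i, V i + L * d a (g i)
  have hF_le : ∀ a i, F a ≤ V i + L * d a (g i) := fun a i => ciInf_le (hbdd a) i
  have hF : ∀ a b, F a - F b ≤ L * d a b := by
    intro a b
    rw [sub_le_comm]
    refine le_ciInf fun i => ?_
    have := mul_le_mul_of_nonneg_left (d_triangle a b (g i)) hL
    linarith [hF_le a i]
  refine ⟨F, fun a b => abs_sub_le_iff.2 ⟨hF a b, d_comm a b ▸ hF b a⟩,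
    fun i => le_antisymm ?_ (le_ciInf fun j => ?_)⟩
  · simpa [d_self] using hF_le (g i) i
  · linarith [hV i j]

theorem continuous_of_abs_sub_le {α : Type*} [TopologicalSpace α] {D : α → α → ℝ}
    (hD : Continuous fun p : α × α => D p.1 p.2) (hD_self : ∀ a, D a a = 0) {F : α → ℝ}
    (hF : ∀ a b, |F a - F b| ≤ D a b) : Continuous F := by
  refine continuous_iff_continuousAt.2 fun b => ?_
  rw [ContinuousAt, tendsto_iff_dist_tendsto_zero]
  refine squeeze_zero (fun _ => dist_nonneg) (fun a => (Real.dist_eq _ _).trans_le (hF a b)) ?_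
  have hDb : Tendsto (fun a => D a b) (𝓝 b) (𝓝 (D b b)) :=
    (hD.comp (continuous_id.prodMk continuous_const)).tendsto b
  rwa [hD_self] at hDb

theorem tendstoUniformlyOn_of_tendsto_denseRange {α ι : Type*} [TopologicalSpace α]
    {D : α → α → ℝ} (hD : Continuous fun p : α × α => D p.1 p.2) (hD_self : ∀ a, D a a = 0)
    {G : ι → α → ℝ} {F : α → ℝ} (hG : ∀ n a b, |G n a - G n b| ≤ D a b)
    (hF : ∀ a b, |F a - F b| ≤ D a b) {g : ℕ → α} (hg : DenseRange g) {l : Filter ι}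
    (hconv : ∀ m, Tendsto (fun n => G n (g m)) l (𝓝 (F (g m)))) {K : Set α} (hK : IsCompact K) :
    TendstoUniformlyOn G F l K := by
  rw [Metric.tendstoUniformlyOn_iff]
  intro ε hε
  have hcover : K ⊆ ⋃ m, {a | D a (g m) < ε / 3} := fun a _ => by
    obtain ⟨m, hm⟩ := hg.exists_mem_open
      (isOpen_lt (hD.comp (continuous_const.prodMk continuous_id)) continuous_const)
      ⟨a, show D a a < ε / 3 by rw [hD_self]; positivity⟩
    exact Set.mem_iUnion.2 ⟨m, hm⟩
  obtain ⟨T, hT⟩ := hK.elim_finite_subcover _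
    (fun m => isOpen_lt (hD.comp (continuous_id.prodMk continuous_const)) continuous_const) hcover
  have hT_conv : ∀ᶠ n in l, ∀ m ∈ T, dist (G n (g m)) (F (g m)) < ε / 3 :=
    (eventually_all_finset T).2 fun m _ => (hconv m).eventually (ball_mem_nhds _ (by positivity))
  filter_upwards [hT_conv] with n hn a ha
  obtain ⟨m, hmT, hm⟩ := Set.mem_iUnion₂.1 (hT ha)
  have hDm : D a (g m) < ε / 3 := hm
  have hGm := hn m hmT
  rw [Real.dist_eq] at hGm ⊢
  have htri : |F a - G n a| ≤ |F a - F (g m)| + |F (g m) - G n (g m)| + |G n (g m) - G n a| :=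
    (abs_sub_le _ (G n (g m)) _).trans (add_le_add (abs_sub_le _ _ _) le_rfl)
  rw [abs_sub_comm (F (g m)), abs_sub_comm (G n (g m)) (G n a)] at htri
  linarith [hF a (g m), hG n a (g m)]

theorem exists_strictMono_tendsto_of_abs_le {ι : Type*} [Countable ι] {u : ℕ → ι → ℝ}
    {C : ι → ℝ} (hu : ∀ n i, |u n i| ≤ C i) :
    ∃ φ : ℕ → ℕ, StrictMono φ ∧ ∃ V : ι → ℝ, ∀ i, Tendsto (fun n => u (φ n) i) atTop (𝓝 (V i)) := by
  obtain ⟨V, -, φ, hφ, hlim⟩ :=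
    (isCompact_univ_pi fun i => isCompact_Icc (a := -C i) (b := C i)).tendsto_subseq
    fun n => Set.mem_univ_pi.2 fun i => abs_le.1 (hu n i)
  exact ⟨φ, hφ, V, fun i => tendsto_pi_nhds.1 hlim i⟩

section MeanField

variable {X : Type*} [MetricSpace X] [MeasurableSpace X] {Z : Type*} [MetricSpace Z]

noncomputable def krDist (p q : ProbabilityMeasure X × Z) : ℝ :=
  dKR (p.1 : Measure X) q.1 + dist p.2 q.2

theorem krDist_self (p : ProbabilityMeasure X × Z) : krDist p p = 0 := by
  simp [krDist, dKR_self]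

variable [CompactSpace X] [BorelSpace X]

theorem krDist_comm (p q : ProbabilityMeasure X × Z) : krDist p q = krDist q p := by
  rw [krDist, krDist, dKR_comm, dist_comm]

theorem krDist_triangle (p q r : ProbabilityMeasure X × Z) :
    krDist p r ≤ krDist p q + krDist q r := by
  have := dKR_triangle (p.1 : Measure X) q.1 r.1
  have := dist_triangle p.2 q.2 r.2
  simp only [krDist]
  linarith

theorem continuous_krDist :
    Continuous fun pq : (ProbabilityMeasure X × Z) × (ProbabilityMeasure X × Z) =>
      krDist pq.1 pq.2 :=
  (continuous_dKR.comp ((continuous_fst.comp continuous_fst).prodMk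
    (continuous_fst.comp continuous_snd))).add
    ((continuous_snd.comp continuous_fst).dist (continuous_snd.comp continuous_snd))

theorem exists_krDist_lipschitz_lift [Nonempty X] [Nonempty Z] {M : ℕ} {L : ℝ} (hL : 0 ≤ L)
    (f : (Fin (M + 1) → X) → Z → ℝ)
    (hf : ∀ x₁ x₂ z₁ z₂,
      |f x₁ z₁ - f x₂ z₂| ≤ L * (dKR (empMeasure x₁) (empMeasure x₂) + dist z₁ z₂)) :
    ∃ G : ProbabilityMeasure X × Z → ℝ,
      (∀ p q, |G p - G q| ≤ L * krDist p q) ∧ ∀ x z, G (empProb x, z) = f x z := by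
  obtain ⟨G, hG, hGf⟩ := exists_extension_abs_sub_le krDist_self krDist_comm krDist_triangle hL
    (fun xz : (Fin (M + 1) → X) × Z => (empProb xz.1, xz.2)) (fun xz => f xz.1 xz.2)
    fun _ _ => (le_abs_self _).trans (hf _ _ _ _)
  exact ⟨G, hG, fun x z => hGf (x, z)⟩

theorem abs_le_of_krDist_lipschitz_lift {M : ℕ} {L B : ℝ} (hL : 0 ≤ L) {b : Z → ℝ}
    {f : (Fin (M + 1) → X) → Z → ℝ} (hf : ∀ x z, |f x z| ≤ B + b z)
    {G : ProbabilityMeasure X × Z → ℝ} (hG : ∀ p q, |G p - G q| ≤ L * krDist p q)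
    (hGf : ∀ x z, G (empProb x, z) = f x z) (p : ProbabilityMeasure X × Z) :
    |G p| ≤ B + L * diam (Set.univ : Set X) + b p.2 := by
  have : Nonempty X := p.1.nonempty
  set x₀ : Fin (M + 1) → X := fun _ => Classical.arbitrary X
  have hdist : krDist p (empProb x₀, p.2) ≤ diam (Set.univ : Set X) := by
    simpa [krDist] using dKR_le_diam (p.1 : Measure X) (empProb x₀ : Measure X)
  have h1 := (hG p (empProb x₀, p.2)).trans (mul_le_mul_of_nonneg_left hdist hL)
  rw [hGf] at h1
  linarith [abs_sub_abs_le_abs_sub (G p) (f x₀ p.2), hf x₀ p.2]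

end MeanField

theorem mean_field_limit_exists_general {X : Type*} [MetricSpace X] [CompactSpace X]
    [MeasurableSpace X] [BorelSpace X]
    {Z : Type*} [MetricSpace Z] [SigmaCompactSpace Z]
    (L_f B_f : ℝ) (hL : 0 ≤ L_f) (hBf : 0 ≤ B_f) (b : Z → ℝ)
    (f : ∀ M : ℕ, (Fin (M + 1) → X) → Z → ℝ)
    (hBound : ∀ (M : ℕ) (x : Fin (M + 1) → X) (z : Z), |f M x z| ≤ B_f + b z)
    (hLip : ∀ (M : ℕ) (x₁ x₂ : Fin (M + 1) → X) (z₁ z₂ : Z),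
      |f M x₁ z₁ - f M x₂ z₂| ≤ L_f * (dKR (empMeasure x₁) (empMeasure x₂) + dist z₁ z₂)) :
    ∃ (φ : ℕ → ℕ), StrictMono φ ∧
      ∃ F : ProbabilityMeasure X → Z → ℝ,
        Continuous (fun p : ProbabilityMeasure X × Z => F p.1 p.2) ∧
        (∀ (μ₁ μ₂ : ProbabilityMeasure X) (z₁ z₂ : Z),
          |F μ₁ z₁ - F μ₂ z₂| ≤ L_f * (dKR (μ₁ : Measure X) (μ₂ : Measure X) + dist z₁ z₂)) ∧
        (∃ B_F : ℝ, 0 ≤ B_F ∧ ∀ (μ : ProbabilityMeasure X) (z : Z), |F μ z| ≤ B_F + b z) ∧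
        (∀ K : Set Z, IsCompact K → ∀ ε : ℝ, 0 < ε → ∃ N : ℕ, ∀ ℓ ≥ N,
          ∀ (x : Fin (φ ℓ + 1) → X), ∀ z ∈ K, |f (φ ℓ) x z - F (empProb x) z| ≤ ε) := by
  rcases isEmpty_or_nonempty (ProbabilityMeasure X × Z) with hE | hne
  · exact ⟨id, strictMono_id, fun _ _ => 0, continuous_const,
      fun μ _ z _ => isEmptyElim (μ, z), ⟨0, le_rfl, fun μ z => isEmptyElim (μ, z)⟩,
      fun _ _ _ _ => ⟨0, fun _ _ x z _ => isEmptyElim (empProb x, z)⟩⟩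
  have : Nonempty X := hne.some.1.nonempty
  have : Nonempty Z := ⟨hne.some.2⟩
  choose G hG_lip hG_eq using fun M => exists_krDist_lipschitz_lift hL (f M) (hLip M)
  have hG_bound := fun M => abs_le_of_krDist_lipschitz_lift hL (hBound M) (hG_lip M) (hG_eq M)
  obtain ⟨g, hg⟩ := TopologicalSpace.exists_dense_seq (ProbabilityMeasure X × Z)
  obtain ⟨φ, hφ, V, hV⟩ := exists_strictMono_tendsto_of_abs_le fun n m => hG_bound n (g m)
  have hV_lip : ∀ m m', V m - V m' ≤ L_f * krDist (g m) (g m') := fun m m' =>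
    le_of_tendsto' ((hV m).sub (hV m')) fun n => (le_abs_self _).trans (hG_lip _ _ _)
  obtain ⟨F, hF_lip, hF_eq⟩ :=
    exists_extension_abs_sub_le krDist_self krDist_comm krDist_triangle hL g V hV_lip
  have hD : Continuous fun pq : (ProbabilityMeasure X × Z) × (ProbabilityMeasure X × Z) =>
      L_f * krDist pq.1 pq.2 := continuous_const.mul continuous_krDist
  have hunif : ∀ K, IsCompact K → TendstoUniformlyOn (fun n => G (φ n)) F atTop K :=
    fun K hK => tendstoUniformlyOn_of_tendsto_denseRange hD (by simp [krDist_self])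
      (fun n => hG_lip (φ n)) hF_lip hg (fun m => hF_eq m ▸ hV m) hK
  refine ⟨φ, hφ, fun μ z => F (μ, z), continuous_of_abs_sub_le hD (by simp [krDist_self]) hF_lip,
    fun μ₁ μ₂ z₁ z₂ => hF_lip (μ₁, z₁) (μ₂, z₂),
    ⟨B_f + L_f * diam (Set.univ : Set X), add_nonneg hBf (mul_nonneg hL diam_nonneg),
      fun μ z => ?_⟩, fun K hK ε hε => ?_⟩
  · exact le_of_tendsto' ((hunif _ isCompact_singleton).tendsto_at rfl).abs
      fun n => hG_bound (φ n) (μ, z)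
  · obtain ⟨N, hN⟩ := eventually_atTop.1
      (Metric.tendstoUniformlyOn_iff.1 (hunif _ (isCompact_univ.prod hK)) ε hε)
    refine ⟨N, fun ℓ hℓ x z hz => ?_⟩
    simpa [hG_eq, Real.dist_eq, abs_sub_comm] using (hN ℓ hℓ (empProb x, z) ⟨trivial, hz⟩).le

/-- Existence of mean field limits of symmetric, uniformly bounded, uniformly
Lipschitz functions `f_M : X^M × Z → ℝ`: a subsequence converges in mean field, uniformly on
`X^{M_ℓ} × K` for every compact `K ⊆ Z`, to a continuous `L_f`-Lipschitz function
`f : P(X) × Z → ℝ` satisfying `|f(μ,z)| ≤ B_F + b(z)`. -/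
theorem mean_field_limit_exists {X : Type*} [MetricSpace X] [CompactSpace X] [Nonempty X]
    [MeasurableSpace X] [BorelSpace X]
    {Z : Type*} [MetricSpace Z] [LocallyCompactSpace Z] [SigmaCompactSpace Z]
    (L_f B_f : ℝ) (hL : 0 ≤ L_f) (hBf : 0 ≤ B_f) (b : Z → ℝ) (hb : ∀ z, 0 ≤ b z)
    (f : ∀ M : ℕ, (Fin (M + 1) → X) → Z → ℝ)
    (hsym : ∀ (M : ℕ) (σ : Equiv.Perm (Fin (M + 1))) (x : Fin (M + 1) → X) (z : Z),
      f M (x ∘ σ) z = f M x z)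
    (hBound : ∀ (M : ℕ) (x : Fin (M + 1) → X) (z : Z), |f M x z| ≤ B_f + b z)
    (hLip : ∀ (M : ℕ) (x₁ x₂ : Fin (M + 1) → X) (z₁ z₂ : Z),
      |f M x₁ z₁ - f M x₂ z₂| ≤ L_f * (dKR (empMeasure x₁) (empMeasure x₂) + dist z₁ z₂)) :
    ∃ (φ : ℕ → ℕ), StrictMono φ ∧
      ∃ F : ProbabilityMeasure X → Z → ℝ,
        Continuous (fun p : ProbabilityMeasure X × Z => F p.1 p.2) ∧
        (∀ (μ₁ μ₂ : ProbabilityMeasure X) (z₁ z₂ : Z),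
          |F μ₁ z₁ - F μ₂ z₂| ≤ L_f * (dKR (μ₁ : Measure X) (μ₂ : Measure X) + dist z₁ z₂)) ∧
        (∃ B_F : ℝ, 0 ≤ B_F ∧ ∀ (μ : ProbabilityMeasure X) (z : Z), |F μ z| ≤ B_F + b z) ∧
        (∀ K : Set Z, IsCompact K → ∀ ε : ℝ, 0 < ε → ∃ N : ℕ, ∀ ℓ ≥ N,
          ∀ (x : Fin (φ ℓ + 1) → X), ∀ z ∈ K, |f (φ ℓ) x z - F (empProb x) z| ≤ ε) :=
  mean_field_limit_exists_general L_f B_f hL hBf b f hBound hLip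
end

section
/- Let k : 𝒳 × 𝒳 → ℝ be a kernel with RKHS H_k, and f : 𝒳 → ℝ a function. Define 𝒩(f,k) = sup over all N ∈ ℕ₊, x ∈ 𝒳^N, α ∈ ℝ^N of 𝒟(x,α,f,k), where 𝒟 = (∑_n α_n f(x_n)) / (∑_{i,j} α_i α_j k(x_j,x_i))^{1/2} when both numerator and denominator are nonzero, 𝒟 = 0 when both are zero, and 𝒟 = +∞ when the numerator is nonzero but the denominator is zero. Then f ∈ H_k if and only if 𝒩(f,k) < ∞, and in that case ‖f‖_k = 𝒩(f,k). -/
open scoped RealInnerProductSpace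

/-- The quotient `𝒟` with the conventions `0/0 = 0` and `c/0 = +∞` for `c ≠ 0`. -/
noncomputable def Dquot (E W : ℝ) : EReal :=
  if W = 0 then (if E = 0 then 0 else ⊤) else ((E / W : ℝ) : EReal)

/-- `𝒩(f,k)`: the supremum over all finite tuples `x ∈ 𝒳^N`, `α ∈ ℝ^N` of
`(∑ₙ αₙ f(xₙ)) / (∑_{i,j} αᵢ αⱼ k(xⱼ,xᵢ))^{1/2}` with the above conventions. -/
noncomputable def Nq {𝒳 : Type*} (k : 𝒳 → 𝒳 → ℝ) (f : 𝒳 → ℝ) : EReal :=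
  ⨆ (N : ℕ) (_ : 0 < N) (x : Fin N → 𝒳) (α : Fin N → ℝ),
    Dquot (∑ n, α n * f (x n)) (Real.sqrt (∑ i, ∑ j, α i * α j * k (x j) (x i)))

section helpers
variable {𝒳 : Type*} {H : Type*} [NormedAddCommGroup H] [InnerProductSpace ℝ H]

lemma sumsum_eq (Φ : 𝒳 → H) (k : 𝒳 → 𝒳 → ℝ) (hk : ∀ x y, k x y = ⟪Φ x, Φ y⟫)
    {N : ℕ} (x : Fin N → 𝒳) (α : Fin N → ℝ) :
    ∑ i, ∑ j, α i * α j * k (x j) (x i) = ‖∑ n, α n • Φ (x n)‖ ^ 2 := by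
  rw [← real_inner_self_eq_norm_sq, sum_inner]
  rw [Finset.sum_comm]
  refine Finset.sum_congr rfl fun j _ => ?_
  rw [inner_sum]
  refine Finset.sum_congr rfl fun i _ => ?_
  rw [real_inner_smul_left, real_inner_smul_right, hk]
  ring

lemma Nq_nonneg {𝒳 : Type*} [Nonempty 𝒳] (k : 𝒳 → 𝒳 → ℝ) (f : 𝒳 → ℝ) : 0 ≤ Nq k f := by
  refine le_trans ?_ (le_iSup_of_le 1 (le_iSup_of_le Nat.one_pos
    (le_iSup_of_le (fun _ => Classical.arbitrary 𝒳) (le_iSup_of_le 0 le_rfl))))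
  simp [Dquot]

lemma finsupp_to_tuple [Nonempty 𝒳] (Φ : 𝒳 → H) (f : 𝒳 → ℝ) (c : 𝒳 →₀ ℝ) :
    ∃ (N : ℕ) (_ : 0 < N) (x : Fin N → 𝒳) (α : Fin N → ℝ),
      (∑ n, α n • Φ (x n) = Finsupp.linearCombination ℝ Φ c) ∧
      (∑ n, α n * f (x n) = Finsupp.linearCombination ℝ f c) := by
  classical
  obtain ⟨x₀⟩ := ‹Nonempty 𝒳›
  set s := c.support
  set m := s.card
  set e : Fin m ≃ s := s.equivFin.symm
  refine ⟨m + 1, Nat.succ_pos m, Fin.snoc (fun i => (e i : 𝒳)) x₀,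
    Fin.snoc (fun i => c (e i)) 0, ?_, ?_⟩
  · rw [Fin.sum_univ_castSucc]
    simp only [Fin.snoc_castSucc, Fin.snoc_last, zero_smul, add_zero]
    rw [Finsupp.linearCombination_apply, Finsupp.sum]
    rw [← Finset.sum_coe_sort s (fun a => c a • Φ a)]
    exact Fintype.sum_equiv e (fun i => c ↑(e i) • Φ ↑(e i)) (fun a => c ↑a • Φ ↑a) (fun i => rfl)
  · rw [Fin.sum_univ_castSucc]
    simp only [Fin.snoc_castSucc, Fin.snoc_last, zero_mul, add_zero]
    rw [Finsupp.linearCombination_apply, Finsupp.sum]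
    simp only [smul_eq_mul]
    rw [← Finset.sum_coe_sort s (fun a => c a * f a)]
    exact Fintype.sum_equiv e (fun i => c ↑(e i) * f ↑(e i)) (fun a => c ↑a * f ↑a) (fun i => rfl)
end helpers

section main
variable {𝒳 : Type*} {H : Type*} [NormedAddCommGroup H] [InnerProductSpace ℝ H]

lemma term_eq (Φ : 𝒳 → H) (k : 𝒳 → 𝒳 → ℝ) (hk : ∀ x y, k x y = ⟪Φ x, Φ y⟫)
    (f : 𝒳 → ℝ) (g : H) (hf : ∀ x, f x = ⟪g, Φ x⟫)
    {N : ℕ} (x : Fin N → 𝒳) (α : Fin N → ℝ) :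
    Dquot (∑ n, α n * f (x n)) (Real.sqrt (∑ i, ∑ j, α i * α j * k (x j) (x i)))
      = Dquot ⟪g, ∑ n, α n • Φ (x n)⟫ ‖∑ n, α n • Φ (x n)‖ := by
  rw [sumsum_eq Φ k hk, Real.sqrt_sq (norm_nonneg _)]
  congr 1
  rw [inner_sum]
  exact Finset.sum_congr rfl fun n _ => by rw [real_inner_smul_right, hf]

lemma Dquot_le (g v : H) : Dquot ⟪g, v⟫ ‖v‖ ≤ (‖g‖ : EReal) := by
  unfold Dquot
  by_cases hv : ‖v‖ = 0
  · rw [if_pos hv, if_pos (by simp [norm_eq_zero.mp hv])]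
    exact EReal.coe_nonneg.mpr (norm_nonneg g)
  · rw [if_neg hv]
    have h0 : 0 < ‖v‖ := lt_of_le_of_ne (norm_nonneg v) (Ne.symm hv)
    exact EReal.coe_le_coe_iff.mpr ((div_le_iff₀ h0).mpr (real_inner_le_norm g v))

lemma norm_eq_Nq [Nonempty 𝒳]
    (Φ : 𝒳 → H) (k : 𝒳 → 𝒳 → ℝ) (hk : ∀ x y, k x y = ⟪Φ x, Φ y⟫)
    (hdense : Dense (Submodule.span ℝ (Set.range Φ) : Set H))
    (f : 𝒳 → ℝ) (g : H) (hf : ∀ x, f x = ⟪g, Φ x⟫) : (‖g‖ : EReal) = Nq k f := by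
  refine le_antisymm ?_ ?_
  · by_cases hg : g = 0
    · rw [hg]
      simpa using Nq_nonneg k f
    refine le_of_forall_lt fun c hc => ?_
    rcases lt_or_ge c 0 with h0 | h0
    · exact h0.trans_le (Nq_nonneg k f)
    have hctop : c ≠ ⊤ := (hc.trans_le le_top).ne
    have hcbot : c ≠ ⊥ := fun h => absurd h0 (by simp [h])
    set r := c.toReal with hrdef
    have hr : (r : EReal) = c := EReal.coe_toReal hctop hcbot
    have hr0 : 0 ≤ r := by
      have := EReal.coe_le_coe_iff.mp (by rw [hr]; exact_mod_cast h0 : ((0:ℝ):EReal) ≤ (r:EReal))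
      exact this
    have hrg : r < ‖g‖ := EReal.coe_lt_coe_iff.mp (by rw [hr]; exact hc)
    have hng : 0 < ‖g‖ := norm_pos_iff.mpr hg
    set ε := min (‖g‖/2) (‖g‖*(‖g‖-r)/(2*(‖g‖+r))) with hεdef
    have hε : 0 < ε := lt_min (by positivity) (by
      have h1 : 0 < ‖g‖ - r := by linarith
      have h2 : 0 < ‖g‖ + r := by linarith
      positivity)
    obtain ⟨v, hvS, hvd⟩ := Metric.mem_closure_iff.mp (hdense g) ε hε
    have hgv : ‖g - v‖ < ε := by rwa [dist_eq_norm] at hvd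
    have hε1 : ε ≤ ‖g‖/2 := min_le_left _ _
    have hε2 : ε * (2*(‖g‖+r)) ≤ ‖g‖*(‖g‖-r) := by
      have h2 : 0 < 2*(‖g‖+r) := by linarith
      exact (le_div_iff₀ h2).mp (min_le_right _ _)
    have h1 : ⟪g, g - v⟫ ≤ ‖g‖ * ‖g - v‖ := real_inner_le_norm _ _
    have h2 : ⟪g, v⟫ = ‖g‖^2 - ⟪g, g - v⟫ := by
      rw [inner_sub_right, real_inner_self_eq_norm_sq]; ring
    have h3 : ‖v‖ ≤ ‖g‖ + ε := by
      have := norm_sub_norm_le v g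
      rw [norm_sub_rev g v] at hgv
      linarith
    have h4 : ‖g‖ - ε ≤ ‖v‖ := by
      have := norm_sub_norm_le g v
      linarith
    have hvpos : 0 < ‖v‖ := by linarith
    have hkey : r * ‖v‖ < ⟪g, v⟫ := by nlinarith
    obtain ⟨cf, hcf⟩ := Finsupp.mem_span_range_iff_exists_finsupp.mp hvS
    have hcf' : Finsupp.linearCombination ℝ Φ cf = v := by
      rwa [Finsupp.linearCombination_apply]
    obtain ⟨N, hN, x, α, hΦ, -⟩ := finsupp_to_tuple Φ f cf
    rw [hcf'] at hΦ
    refine lt_of_lt_of_le ?_ (le_iSup_of_le N (le_iSup_of_le hN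
      (le_iSup_of_le x (le_iSup_of_le α le_rfl))))
    rw [term_eq Φ k hk f g hf, hΦ]
    rw [Dquot, if_neg hvpos.ne']
    rw [← hr]
    exact EReal.coe_lt_coe_iff.mpr ((lt_div_iff₀ hvpos).mpr hkey)
  · refine iSup_le fun N => iSup_le fun hN => iSup_le fun x => iSup_le fun α => ?_
    rw [term_eq Φ k hk f g hf]
    exact Dquot_le g _

end main

lemma exists_rep {𝒳 : Type*} [Nonempty 𝒳] {H : Type*} [NormedAddCommGroup H]
    [InnerProductSpace ℝ H] [CompleteSpace H]
    (Φ : 𝒳 → H) (k : 𝒳 → 𝒳 → ℝ) (hk : ∀ x y, k x y = ⟪Φ x, Φ y⟫)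
    (f : 𝒳 → ℝ) (hNq : Nq k f < ⊤) : ∃ g : H, ∀ x, f x = ⟪g, Φ x⟫ := by
  classical
  set C := (Nq k f).toReal with hC
  have hbot : Nq k f ≠ ⊥ := ((Nq_nonneg k f).trans_lt' (by simp)).ne'
  have hCeq : ((C : ℝ) : EReal) = Nq k f := EReal.coe_toReal hNq.ne hbot
  have step1 : ∀ (N : ℕ), 0 < N → ∀ (x : Fin N → 𝒳) (α : Fin N → ℝ),
      ∑ n, α n * f (x n) ≤ C * ‖∑ n, α n • Φ (x n)‖ := by
    intro N hNp x α
    have hterm : Dquot (∑ n, α n * f (x n))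
        (Real.sqrt (∑ i, ∑ j, α i * α j * k (x j) (x i))) ≤ (C : EReal) := by
      rw [hCeq]
      exact le_iSup_of_le N (le_iSup_of_le hNp (le_iSup_of_le x (le_iSup_of_le α le_rfl)))
    rw [sumsum_eq Φ k hk, Real.sqrt_sq (norm_nonneg _)] at hterm
    set v := ∑ n, α n • Φ (x n) with hv
    set E := ∑ n, α n * f (x n) with hE
    by_cases hvz : ‖v‖ = 0
    · rw [Dquot, if_pos hvz] at hterm
      by_cases hEz : E = 0
      · rw [hEz, hvz, mul_zero]
      · rw [if_neg hEz] at hterm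
        exact absurd hterm (by simp)
    · rw [Dquot, if_neg hvz] at hterm
      have hvp : 0 < ‖v‖ := lt_of_le_of_ne (norm_nonneg v) (Ne.symm hvz)
      exact (div_le_iff₀ hvp).mp (EReal.coe_le_coe_iff.mp hterm)
  set T := Finsupp.linearCombination ℝ Φ with hT
  set L₀ := Finsupp.linearCombination ℝ f with hL
  have hb : ∀ c : 𝒳 →₀ ℝ, L₀ c ≤ C * ‖T c‖ := by
    intro c
    obtain ⟨N, hNp, x, α, h1, h2⟩ := finsupp_to_tuple Φ f c
    rw [← h1, ← h2]
    exact step1 N hNp x α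
  have habs : ∀ c : 𝒳 →₀ ℝ, |L₀ c| ≤ C * ‖T c‖ := by
    intro c
    refine abs_le.mpr ⟨?_, hb c⟩
    have := hb (-c)
    rw [map_neg, map_neg, norm_neg] at this
    linarith
  have hker : LinearMap.ker T ≤ LinearMap.ker L₀ := by
    intro c hc
    rw [LinearMap.mem_ker] at hc ⊢
    have := habs c
    rw [hc, norm_zero, mul_zero] at this
    exact abs_eq_zero.mp (le_antisymm this (abs_nonneg _))
  set S := Submodule.span ℝ (Set.range Φ) with hS
  have hrange : LinearMap.range T = S := Finsupp.range_linearCombination ℝ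
  set L : S →ₗ[ℝ] ℝ :=
    (Submodule.liftQ (LinearMap.ker T) L₀ hker) ∘ₗ
      (T.quotKerEquivRange.symm.toLinearMap) ∘ₗ
      (LinearEquiv.ofEq S (LinearMap.range T) hrange.symm).toLinearMap with hLdef
  have hLval : ∀ (c : 𝒳 →₀ ℝ) (h : T c ∈ S), L ⟨T c, h⟩ = L₀ c := by
    intro c h
    have h1 : (LinearEquiv.ofEq S (LinearMap.range T) hrange.symm) ⟨T c, h⟩
        = ⟨T c, LinearMap.mem_range_self T c⟩ := Subtype.ext rfl
    have h2 : T.quotKerEquivRange.symm ⟨T c, LinearMap.mem_range_self T c⟩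
        = Submodule.Quotient.mk c := T.quotKerEquivRange_symm_apply_image c _
    simp only [hLdef, LinearMap.coe_comp, Function.comp_apply, LinearEquiv.coe_coe, h1, h2,
      Submodule.liftQ_apply]
  have hLbound : ∀ v : S, ‖L v‖ ≤ C * ‖v‖ := by
    intro v
    obtain ⟨c, hc⟩ : ∃ c, T c = (v : H) := by
      have : (v : H) ∈ LinearMap.range T := by rw [hrange]; exact v.2
      exact this
    have hv : v = ⟨T c, hc ▸ v.2⟩ := Subtype.ext hc.symm
    rw [hv, hLval c _]
    rw [Real.norm_eq_abs]
    have : ‖(⟨T c, hc ▸ v.2⟩ : S)‖ = ‖T c‖ := rfl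
    rw [this]
    exact habs c
  set Lc : S →L[ℝ] ℝ := LinearMap.mkContinuous L C hLbound with hLc
  obtain ⟨ℓ, hext, -⟩ := exists_extension_norm_eq S Lc
  refine ⟨(InnerProductSpace.toDual ℝ H).symm ℓ, fun x => ?_⟩
  rw [InnerProductSpace.toDual_symm_apply]
  have hmem : Φ x ∈ S := Submodule.subset_span (Set.mem_range_self x)
  have hTx : T (Finsupp.single x 1) = Φ x := by
    rw [hT, Finsupp.linearCombination_single, one_smul]
  have h5 : ℓ (Φ x) = Lc ⟨Φ x, hmem⟩ := hext ⟨Φ x, hmem⟩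
  have h6 : Lc ⟨Φ x, hmem⟩ = L ⟨Φ x, hmem⟩ := rfl
  have h7 : (⟨Φ x, hmem⟩ : S) = ⟨T (Finsupp.single x 1), hTx ▸ hmem⟩ := Subtype.ext hTx.symm
  rw [h5, h6, h7, hLval]
  rw [hL, Finsupp.linearCombination_single, smul_eq_mul, one_mul]

/-- Characterization of RKHS functions. With the RKHS of `k` realized by a feature
map `Φ` into a Hilbert space `H` with dense span, a function `f : 𝒳 → ℝ` belongs to the RKHS
iff `𝒩(f,k) < ∞`, and in that case its RKHS norm (the norm of its representer) equals `𝒩(f,k)`. -/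
theorem rkhs_characterization {𝒳 : Type*} [Nonempty 𝒳]
    {H : Type*} [NormedAddCommGroup H] [InnerProductSpace ℝ H] [CompleteSpace H]
    (Φ : 𝒳 → H) (k : 𝒳 → 𝒳 → ℝ) (hk : ∀ x y, k x y = ⟪Φ x, Φ y⟫)
    (hdense : Dense (Submodule.span ℝ (Set.range Φ) : Set H))
    (f : 𝒳 → ℝ) :
    ((∃ g : H, ∀ x, f x = ⟪g, Φ x⟫) ↔ Nq k f < ⊤) ∧
      (∀ g : H, (∀ x, f x = ⟪g, Φ x⟫) → (‖g‖ : EReal) = Nq k f) := by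
  refine ⟨⟨?_, fun h => exists_rep Φ k hk f h⟩,
    fun g hg => norm_eq_Nq Φ k hk hdense f g hg⟩
  rintro ⟨g, hg⟩
  rw [← norm_eq_Nq Φ k hk hdense f g hg]
  exact EReal.coe_lt_top _
end

section
/- Let k : 𝒳 × 𝒳 → ℝ be a kernel with RKHS H_k, f : 𝒳 → ℝ with 𝒩(f,k) < ∞ (the supremum of the quotients 𝒟(x,α,f,k) over all finite tuples). Then the map ℓ_f on the pre-Hilbert space span{k(·,x) : x ∈ 𝒳} sending ∑_n α_n k(·,x_n) to ∑_n α_n f(x_n) is well-defined (independent of the representation), linear, and bounded with operator norm at most 𝒩(f,k). -/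
open scoped RealInnerProductSpace

/-!
If `𝒩(f,k) = C < ∞`, then every finite combination satisfies
`|∑ αₙ f(xₙ)| ≤ C ‖∑ αₙ Φ(xₙ)‖`, since the Gram sum `∑ αᵢ αⱼ k(xⱼ,xᵢ)` is `‖∑ αₙ Φ(xₙ)‖²`.
Hence the linear map `c ↦ ∑ c(x) f(x)` on finitely supported coefficients vanishes on the kernel
of `c ↦ ∑ c(x) Φ(x)`, so it descends to the span of `Φ` with the same bound. Two representations
with the same kernel sections `∑ αₙ k(t,xₙ)` have the same image in `H`, because their difference
lies in the span of `Φ` and is orthogonal to every `Φ t`.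
-/

theorem Dquot_ne_bot (E W : ℝ) : Dquot E W ≠ ⊥ := by
  unfold Dquot
  split_ifs <;> simp

theorem le_toReal_mul_of_Dquot_le {E W : ℝ} {C : EReal} (hW : 0 ≤ W) (hC : C ≠ ⊤)
    (h : Dquot E W ≤ C) : E ≤ C.toReal * W := by
  have hC' : C ≠ ⊥ := ne_bot_of_le_ne_bot (Dquot_ne_bot E W) h
  rw [← EReal.coe_toReal hC hC'] at h
  unfold Dquot at h
  split_ifs at h with hW0 hE0
  · simp [hW0, hE0]
  · exact absurd h (by simp)
  · rwa [EReal.coe_le_coe_iff, div_le_iff₀ (lt_of_le_of_ne hW (Ne.symm hW0))] at h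

theorem Dquot_le_Nq {𝒳 : Type*} (k : 𝒳 → 𝒳 → ℝ) (f : 𝒳 → ℝ) {N : ℕ} (hN : 0 < N)
    (x : Fin N → 𝒳) (α : Fin N → ℝ) :
    Dquot (∑ n, α n * f (x n)) (Real.sqrt (∑ i, ∑ j, α i * α j * k (x j) (x i))) ≤ Nq k f :=
  le_iSup_of_le N <| le_iSup_of_le hN <| le_iSup_of_le x <| le_iSup_of_le α le_rfl

theorem LinearMap.exists_comp_eq_of_surjective_of_ker_le {R V W M : Type*} [Ring R]
    [AddCommGroup V] [Module R V] [AddCommGroup W] [Module R W] [AddCommGroup M] [Module R M]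
    {π : V →ₗ[R] W} (hπ : Function.Surjective π) {g : V →ₗ[R] M}
    (h : LinearMap.ker π ≤ LinearMap.ker g) : ∃ ℓ : W →ₗ[R] M, ℓ ∘ₗ π = g :=
  ⟨(LinearMap.ker π).liftQ g h ∘ₗ (π.quotKerEquivOfSurjective hπ).symm.toLinearMap,
    LinearMap.ext fun v => by
      have hv : π v = π.quotKerEquivOfSurjective hπ (Submodule.Quotient.mk v) := rfl
      simp only [LinearMap.comp_apply, LinearEquiv.coe_coe]
      rw [hv, LinearEquiv.symm_apply_apply, Submodule.liftQ_apply]⟩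

theorem Finsupp.linearCombination_sum_single {α R M : Type*} [Semiring R] [AddCommMonoid M]
    [Module R M] (g : α → M) {ι : Type*} [Fintype ι] (x : ι → α) (a : ι → R) :
    Finsupp.linearCombination R g (∑ n, Finsupp.single (x n) (a n)) = ∑ n, a n • g (x n) := by
  simp only [map_sum, Finsupp.linearCombination_single]

theorem sum_smul_mem_span_range {α ι R M : Type*} [Semiring R] [AddCommMonoid M] [Module R M]
    [Fintype ι] (g : α → M) (x : ι → α) (a : ι → R) :
    ∑ n, a n • g (x n) ∈ Submodule.span R (Set.range g) :=
  Submodule.sum_smul_mem _ a fun n _ => Submodule.subset_span ⟨x n, rfl⟩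

section FeatureMap

variable {𝒳 H : Type*} [NormedAddCommGroup H] [InnerProductSpace ℝ H]
  {Φ : 𝒳 → H} {k : 𝒳 → 𝒳 → ℝ}

theorem sqrt_gram_eq_norm_sum (hk : ∀ x y, k x y = ⟪Φ x, Φ y⟫) {ι : Type*} [Fintype ι]
    (x : ι → 𝒳) (α : ι → ℝ) :
    Real.sqrt (∑ i, ∑ j, α i * α j * k (x j) (x i)) = ‖∑ n, α n • Φ (x n)‖ := by
  have hgram : ∑ i, ∑ j, α i * α j * k (x j) (x i) =
      ⟪∑ n, α n • Φ (x n), ∑ n, α n • Φ (x n)⟫ := by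
    simp only [sum_inner, inner_sum, real_inner_smul_left, real_inner_smul_right, hk]
    rw [Finset.sum_comm]
    exact Finset.sum_congr rfl fun i _ => Finset.sum_congr rfl fun j _ => by
      rw [real_inner_comm]; ring
  rw [hgram, real_inner_self_eq_norm_sq, Real.sqrt_sq (norm_nonneg _)]

variable {f : 𝒳 → ℝ}

theorem sum_mul_le_toReal_Nq_mul_norm (hk : ∀ x y, k x y = ⟪Φ x, Φ y⟫) (hN : Nq k f < ⊤)
    {N : ℕ} (x : Fin N → 𝒳) (α : Fin N → ℝ) :
    ∑ n, α n * f (x n) ≤ (Nq k f).toReal * ‖∑ n, α n • Φ (x n)‖ := by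
  rcases N.eq_zero_or_pos with rfl | hpos
  · simp
  have h := Dquot_le_Nq k f hpos x α
  rw [sqrt_gram_eq_norm_sum hk] at h
  exact le_toReal_mul_of_Dquot_le (norm_nonneg _) hN.ne h

theorem abs_sum_mul_le_toReal_Nq_mul_norm (hk : ∀ x y, k x y = ⟪Φ x, Φ y⟫) (hN : Nq k f < ⊤)
    {N : ℕ} (x : Fin N → 𝒳) (α : Fin N → ℝ) :
    |∑ n, α n * f (x n)| ≤ (Nq k f).toReal * ‖∑ n, α n • Φ (x n)‖ := by
  refine abs_le.mpr ⟨?_, sum_mul_le_toReal_Nq_mul_norm hk hN x α⟩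
  have h := sum_mul_le_toReal_Nq_mul_norm hk hN x (-α)
  simp only [Pi.neg_apply, neg_mul, neg_smul, Finset.sum_neg_distrib, norm_neg] at h
  linarith

theorem abs_linearCombination_le_toReal_Nq_mul_norm (hk : ∀ x y, k x y = ⟪Φ x, Φ y⟫)
    (hN : Nq k f < ⊤) (c : 𝒳 →₀ ℝ) :
    |Finsupp.linearCombination ℝ f c| ≤
      (Nq k f).toReal * ‖Finsupp.linearCombination ℝ Φ c‖ := by
  let e := c.support.equivFin
  have h := abs_sum_mul_le_toReal_Nq_mul_norm hk hN
    (fun n => (e.symm n : 𝒳)) (fun n => c (e.symm n))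
  rw [e.symm.sum_comp (fun a : c.support => c a * f a),
    e.symm.sum_comp (fun a : c.support => c a • Φ a),
    Finset.sum_coe_sort c.support (fun a => c a * f a),
    Finset.sum_coe_sort c.support (fun a => c a • Φ a)] at h
  simpa only [Finsupp.linearCombination_apply, Finsupp.sum, smul_eq_mul] using h

theorem eq_zero_of_mem_span_of_forall_inner_eq_zero {z : H}
    (hz : z ∈ Submodule.span ℝ (Set.range Φ)) (h : ∀ t, ⟪Φ t, z⟫ = 0) : z = 0 := by
  have hle : Submodule.span ℝ (Set.range Φ) ≤ (ℝ ∙ z)ᗮ := by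
    refine Submodule.span_le.mpr ?_
    rintro _ ⟨t, rfl⟩
    exact Submodule.mem_orthogonal_singleton_iff_inner_right.mpr (real_inner_comm z _ ▸ h t)
  exact inner_self_eq_zero.mp (Submodule.mem_orthogonal_singleton_iff_inner_right.mp (hle hz))

theorem sum_smul_eq_of_forall_sum_mul_kernel_eq (hk : ∀ x y, k x y = ⟪Φ x, Φ y⟫) {N M : ℕ}
    {x : Fin N → 𝒳} {α : Fin N → ℝ} {y : Fin M → 𝒳} {β : Fin M → ℝ}
    (h : ∀ t, ∑ n, α n * k t (x n) = ∑ m, β m * k t (y m)) :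
    ∑ n, α n • Φ (x n) = ∑ m, β m • Φ (y m) := by
  refine sub_eq_zero.mp (eq_zero_of_mem_span_of_forall_inner_eq_zero
    (Submodule.sub_mem _ (sum_smul_mem_span_range Φ x α) (sum_smul_mem_span_range Φ y β))
    fun t => ?_)
  simpa only [inner_sub_right, inner_sum, real_inner_smul_right, hk, sub_eq_zero] using h t

theorem exists_linearMap_span_eq_linearCombination (hk : ∀ x y, k x y = ⟪Φ x, Φ y⟫)
    (hN : Nq k f < ⊤) :
    ∃ ℓ : Submodule.span ℝ (Set.range Φ) →ₗ[ℝ] ℝ, ∀ (u : Submodule.span ℝ (Set.range Φ))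
      (c : 𝒳 →₀ ℝ), (u : H) = Finsupp.linearCombination ℝ Φ c →
        ℓ u = Finsupp.linearCombination ℝ f c := by
  let π := (Finsupp.linearCombination ℝ Φ).codRestrict (Submodule.span ℝ (Set.range Φ))
    fun c => by rw [← Finsupp.range_linearCombination]; exact LinearMap.mem_range_self _ c
  have hπ : Function.Surjective π := fun u => by
    obtain ⟨c, hc⟩ := Finsupp.mem_span_range_iff_exists_finsupp.mp u.2
    exact ⟨c, Subtype.ext (by rw [← hc]; rfl)⟩
  have hker : LinearMap.ker π ≤ LinearMap.ker (Finsupp.linearCombination ℝ f) := fun c hc => by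
    have hc : Finsupp.linearCombination ℝ Φ c = 0 := congrArg Subtype.val hc
    have := abs_linearCombination_le_toReal_Nq_mul_norm hk hN c
    rwa [hc, norm_zero, mul_zero, abs_nonpos_iff] at this
  obtain ⟨ℓ, hℓ⟩ := LinearMap.exists_comp_eq_of_surjective_of_ker_le hπ hker
  refine ⟨ℓ, fun u c hu => ?_⟩
  rw [show u = π c from Subtype.ext hu, ← LinearMap.comp_apply, hℓ]

end FeatureMap

theorem prelinear_functional_well_defined_general {𝒳 : Type*}
    {H : Type*} [NormedAddCommGroup H] [InnerProductSpace ℝ H]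
    (Φ : 𝒳 → H) (k : 𝒳 → 𝒳 → ℝ) (hk : ∀ x y, k x y = ⟪Φ x, Φ y⟫)
    (f : 𝒳 → ℝ) (hN : Nq k f < ⊤) :
    -- well-definedness: equal representations give equal values
    (∀ (N M : ℕ) (x : Fin N → 𝒳) (α : Fin N → ℝ) (y : Fin M → 𝒳) (β : Fin M → ℝ),
        (∀ t : 𝒳, ∑ n, α n * k t (x n) = ∑ m, β m * k t (y m)) →
        ∑ n, α n * f (x n) = ∑ m, β m * f (y m)) ∧
    -- existence of the linear bounded functional `ℓ_f` on the pre-space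
    ∃ ℓ : Submodule.span ℝ (Set.range Φ) →ₗ[ℝ] ℝ,
      (∀ (u : Submodule.span ℝ (Set.range Φ)) (N : ℕ) (x : Fin N → 𝒳) (α : Fin N → ℝ),
        (u : H) = ∑ n, α n • Φ (x n) → ℓ u = ∑ n, α n * f (x n)) ∧
      (∀ u : Submodule.span ℝ (Set.range Φ), |ℓ u| ≤ (Nq k f).toReal * ‖(u : H)‖) := by
  obtain ⟨ℓ, hℓ⟩ := exists_linearMap_span_eq_linearCombination hk hN
  have hrepr : ∀ (u : Submodule.span ℝ (Set.range Φ)) (N : ℕ) (x : Fin N → 𝒳) (α : Fin N → ℝ),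
      (u : H) = ∑ n, α n • Φ (x n) → ℓ u = ∑ n, α n * f (x n) := fun u N x α hu => by
    rw [← Finsupp.linearCombination_sum_single Φ] at hu
    simpa only [Finsupp.linearCombination_sum_single, smul_eq_mul] using hℓ u _ hu
  refine ⟨fun N M x α y β h => ?_, ℓ, hrepr, fun u => ?_⟩
  · let v : Submodule.span ℝ (Set.range Φ) := ⟨_, sum_smul_mem_span_range Φ x α⟩
    rw [← hrepr v N x α rfl, hrepr v M y β (sum_smul_eq_of_forall_sum_mul_kernel_eq hk h)]
  · obtain ⟨c, hc⟩ := Finsupp.mem_span_range_iff_exists_finsupp.mp u.2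
    rw [← Finsupp.linearCombination_apply] at hc
    rw [hℓ u c hc.symm, ← hc]
    exact abs_linearCombination_le_toReal_Nq_mul_norm hk hN c

/-- If `𝒩(f,k) < ∞`, then `ℓ_f : ∑ₙ αₙ k(·,xₙ) ↦ ∑ₙ αₙ f(xₙ)` is well-defined
(independent of the representation), linear, and bounded on the pre-Hilbert space
`span{k(·,x) : x ∈ 𝒳}` (realized as `span(range Φ)`), with operator norm at most `𝒩(f,k)`. -/
theorem prelinear_functional_well_defined {𝒳 : Type*} [Nonempty 𝒳]
    {H : Type*} [NormedAddCommGroup H] [InnerProductSpace ℝ H] [CompleteSpace H]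
    (Φ : 𝒳 → H) (k : 𝒳 → 𝒳 → ℝ) (hk : ∀ x y, k x y = ⟪Φ x, Φ y⟫)
    (f : 𝒳 → ℝ) (hN : Nq k f < ⊤) :
    -- well-definedness: equal representations give equal values
    (∀ (N M : ℕ) (x : Fin N → 𝒳) (α : Fin N → ℝ) (y : Fin M → 𝒳) (β : Fin M → ℝ),
        (∀ t : 𝒳, ∑ n, α n * k t (x n) = ∑ m, β m * k t (y m)) →
        ∑ n, α n * f (x n) = ∑ m, β m * f (y m)) ∧
    -- existence of the linear bounded functional `ℓ_f` on the pre-space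
    ∃ ℓ : Submodule.span ℝ (Set.range Φ) →ₗ[ℝ] ℝ,
      (∀ (u : Submodule.span ℝ (Set.range Φ)) (N : ℕ) (x : Fin N → 𝒳) (α : Fin N → ℝ),
        (u : H) = ∑ n, α n • Φ (x n) → ℓ u = ∑ n, α n * f (x n)) ∧
      (∀ u : Submodule.span ℝ (Set.range Φ), |ℓ u| ≤ (Nq k f).toReal * ‖(u : H)‖) :=
  prelinear_functional_well_defined_general Φ k hk f hN
end

section
/- Let N ∈ ℕ₊, H a real Hilbert space, x₁,…,x_N elements of a set 𝒳, k a kernel on 𝒳 with RKHS H_k, L : ℝ^N → ℝ≥0 continuous and strictly convex, and λ > 0. Then the regularized problem min_{f ∈ H_k} L(f(x₁),…,f(x_N)) + λ‖f‖_k has a unique minimizer f*, and f* lies in span{k(·,x₁),…,k(·,x_N)}, i.e., f* = ∑_{n=1}^N α_n k(·,x_n) for some α ∈ ℝ^N. -/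
/-!
Elements of `H` act as functions on `𝒳` through the feature map, `f(x) = ⟪f, Φ x⟫`, so the
objective only sees `f` through the samples `⟪f, Φ xₙ⟫`. Projecting `f` orthogonally onto
`K = span {Φ xₙ}` keeps every sample and does not increase `‖f‖`, so it suffices to minimize over
the finite-dimensional space `K`, where the objective is continuous and coercive. Two distinct
minimizers would have a strictly better midpoint: by strict convexity of `L` if their samples
differ, and by strict convexity of the Hilbert norm (their norms being then equal) otherwise.
-/

open scoped RealInnerProductSpace
open Filter Set Submodule

section RegularizedRisk

variable {E ι : Type*} [NormedAddCommGroup E] [InnerProductSpace ℝ E]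

def regularizedRisk (v : ι → E) (L : (ι → ℝ) → ℝ) (lam : ℝ) (f : E) : ℝ :=
  L (fun i => ⟪f, v i⟫) + lam * ‖f‖

variable {v : ι → E} {L : (ι → ℝ) → ℝ} {lam : ℝ}

theorem continuous_regularizedRisk (hL : Continuous L) : Continuous (regularizedRisk v L lam) :=
  (hL.comp (continuous_pi fun _ => continuous_id.inner continuous_const)).add
    (continuous_const.mul continuous_norm)

theorem regularizedRisk_starProjection_le (K : Submodule ℝ E) [K.HasOrthogonalProjection]
    (hv : ∀ i, v i ∈ K) (hlam : 0 ≤ lam) (g : E) :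
    regularizedRisk v L lam (K.starProjection g) ≤ regularizedRisk v L lam g := by
  have hsample : (fun i => ⟪K.starProjection g, v i⟫) = fun i => ⟪g, v i⟫ := by
    ext i
    rw [inner_starProjection_left_eq_right, starProjection_eq_self_iff.mpr (hv i)]
  unfold regularizedRisk
  rw [hsample]
  gcongr
  exact K.norm_starProjection_apply_le g

theorem exists_mem_span_forall_regularizedRisk_le [Finite ι] (hL : Continuous L) (c : ℝ)
    (hc : ∀ u, c ≤ L u) (hlam : 0 < lam) :
    ∃ f ∈ span ℝ (range v), ∀ g, regularizedRisk v L lam f ≤ regularizedRisk v L lam g := by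
  set K := span ℝ (range v)
  have : FiniteDimensional ℝ K := .span_of_finite ℝ (finite_range v)
  have hcoercive : Tendsto (fun w : K => regularizedRisk v L lam w) (cocompact K) atTop := by
    refine tendsto_atTop_mono (fun w => ?_) <|
      tendsto_atTop_add_const_left _ c (tendsto_norm_cocompact_atTop.const_mul_atTop hlam)
    exact add_le_add_left (hc _) _
  obtain ⟨f, hf⟩ :=
    ((continuous_regularizedRisk hL).comp continuous_subtype_val).exists_forall_le hcoercive
  exact ⟨f, f.2, fun g => (hf _).trans <|
    regularizedRisk_starProjection_le K (fun i => subset_span ⟨i, rfl⟩) hlam.le g⟩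

theorem regularizedRisk_midpoint_lt (hL : StrictConvexOn ℝ univ L) (hlam : 0 < lam) {f g : E}
    (hfg : f ≠ g) (heq : regularizedRisk v L lam f = regularizedRisk v L lam g) :
    regularizedRisk v L lam ((1 / 2 : ℝ) • (f + g)) < regularizedRisk v L lam f := by
  set sample : E → ι → ℝ := fun f i => ⟪f, v i⟫
  have hsample :
      sample ((1 / 2 : ℝ) • (f + g)) = (1 / 2 : ℝ) • sample f + (1 / 2 : ℝ) • sample g := by
    ext i
    simp only [sample, inner_smul_left, inner_add_left, Pi.add_apply, Pi.smul_apply, smul_eq_mul,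
      conj_trivial]
    ring
  have hnorm : ‖(1 / 2 : ℝ) • (f + g)‖ ≤ 1 / 2 * ‖f‖ + 1 / 2 * ‖g‖ := by
    rw [norm_smul, Real.norm_of_nonneg (by norm_num)]
    linarith [norm_add_le f g]
  change L (sample _) + lam * _ < L (sample f) + lam * _
  change L (sample f) + lam * _ = L (sample g) + lam * _ at heq
  rw [hsample]
  by_cases hs : sample f = sample g
  · have hn : ‖f‖ = ‖g‖ := by
      rw [hs] at heq
      exact mul_left_cancel₀ hlam.ne' (add_left_cancel heq)
    rw [hs, ← add_smul, add_halves, one_smul]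
    gcongr
    exact (norm_midpoint_lt_iff hn).2 hfg
  · have hLlt := hL.2 (mem_univ _) (mem_univ _) hs (by norm_num : (0 : ℝ) < 1 / 2)
      (by norm_num : (0 : ℝ) < 1 / 2) (add_halves 1)
    simp only [smul_eq_mul] at hLlt
    nlinarith [mul_le_mul_of_nonneg_left hnorm hlam.le]

theorem eq_of_forall_regularizedRisk_le (hL : StrictConvexOn ℝ univ L) (hlam : 0 < lam)
    {f g : E} (hf : ∀ h, regularizedRisk v L lam f ≤ regularizedRisk v L lam h)
    (hg : ∀ h, regularizedRisk v L lam g ≤ regularizedRisk v L lam h) : f = g := by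
  by_contra hfg
  exact (regularizedRisk_midpoint_lt hL hlam hfg (le_antisymm (hf g) (hg f))).not_ge (hf _)

end RegularizedRisk

theorem representer_theorem_general {𝒳 : Type*}
    {H : Type*} [NormedAddCommGroup H] [InnerProductSpace ℝ H]
    (Φ : 𝒳 → H)
    (N : ℕ) (x : Fin N → 𝒳)
    (L : (Fin N → ℝ) → ℝ) (hL0 : ∀ v, 0 ≤ L v) (hLc : Continuous L)
    (hLsc : StrictConvexOn ℝ Set.univ L)
    (lam : ℝ) (hlam : 0 < lam) :
    ∃ f : H,
      (∀ g : H, L (fun n => ⟪f, Φ (x n)⟫) + lam * ‖f‖ ≤ L (fun n => ⟪g, Φ (x n)⟫) + lam * ‖g‖) ∧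
      (∃ α : Fin N → ℝ, f = ∑ n, α n • Φ (x n)) ∧
      (∀ f' : H,
        (∀ g : H, L (fun n => ⟪f', Φ (x n)⟫) + lam * ‖f'‖ ≤
          L (fun n => ⟪g, Φ (x n)⟫) + lam * ‖g‖) → f' = f) := by
  obtain ⟨f, hf_span, hf_min⟩ :=
    exists_mem_span_forall_regularizedRisk_le (v := fun n => Φ (x n)) hLc 0 hL0 hlam
  obtain ⟨α, hα⟩ := (mem_span_range_iff_exists_fun ℝ).mp hf_span
  exact ⟨f, hf_min, ⟨α, hα.symm⟩,
    fun f' hf' => eq_of_forall_regularizedRisk_le hLsc hlam hf' hf_min⟩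

/-- Representer theorem with the (unsquared) RKHS-norm regularizer: for
`L : ℝ^N → ℝ≥0` continuous and strictly convex and `λ > 0`, the problem
`min_{f ∈ H_k} L(f(x₁),…,f(x_N)) + λ‖f‖ₖ` has a unique minimizer, which lies in
`span{k(·,x₁),…,k(·,x_N)}`. The RKHS of `k` is realized by a feature map `Φ` with dense span,
so that `f(x) = ⟪f, Φ x⟫`. -/
theorem representer_theorem {𝒳 : Type*} [Nonempty 𝒳]
    {H : Type*} [NormedAddCommGroup H] [InnerProductSpace ℝ H] [CompleteSpace H]
    (Φ : 𝒳 → H) (k : 𝒳 → 𝒳 → ℝ) (hk : ∀ x y, k x y = ⟪Φ x, Φ y⟫)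
    (hdense : Dense (Submodule.span ℝ (Set.range Φ) : Set H))
    (N : ℕ) (hN : 0 < N) (x : Fin N → 𝒳)
    (L : (Fin N → ℝ) → ℝ) (hL0 : ∀ v, 0 ≤ L v) (hLc : Continuous L)
    (hLsc : StrictConvexOn ℝ Set.univ L)
    (lam : ℝ) (hlam : 0 < lam) :
    ∃ f : H,
      (∀ g : H, L (fun n => ⟪f, Φ (x n)⟫) + lam * ‖f‖ ≤ L (fun n => ⟪g, Φ (x n)⟫) + lam * ‖g‖) ∧
      (∃ α : Fin N → ℝ, f = ∑ n, α n • Φ (x n)) ∧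
      (∀ f' : H,
        (∀ g : H, L (fun n => ⟪f', Φ (x n)⟫) + lam * ‖f'‖ ≤
          L (fun n => ⟪g, Φ (x n)⟫) + lam * ‖g‖) → f' = f) :=
  representer_theorem_general Φ N x L hL0 hLc hLsc lam hlam
end
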